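/- There is an isomorphism of categories over Δ between Arr^act(Δ)^cart (objects: active maps in Δ; morphisms: commutative squares whose codomain component is inert) with the domain projection, and the category of elements el(Bℕ) of the nerve of Bℕ with its projection to Δ. On objects over [k], the isomorphism sends an active map α : [k] → [n] to the k-tuple (α(1)−α(0), ..., α(k)−α(k−1)) ∈ ℕ^k. -/

import Mathlib

/-! Preliminaries: the active-inert factorization system on the simplex
category, the inert subcategory `Δ_inert`, the one-object category `Bℕ`,
twisted arrow categories, and the explicit free decomposition space formula,
following Hackney–Kock, "Free decomposition spaces". -/

open CategoryTheory SimplexCategory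

namespace FreeDecompPaper

/-- A map in the simplex category is *active* if it preserves endpoints:
`f 0 = 0` and `f (last) = last`. -/
def IsActive {x y : SimplexCategory} (f : x ⟶ y) : Prop :=
  f.toOrderHom 0 = 0 ∧ f.toOrderHom (Fin.last x.len) = Fin.last y.len

/-- A map in the simplex category is *inert* (distance-preserving) if
`f (i+1) = f i + 1` for all `i`. -/
def IsInert {x y : SimplexCategory} (f : x ⟶ y) : Prop :=
  ∀ i : Fin x.len, (f.toOrderHom i.succ : ℕ) = (f.toOrderHom i.castSucc : ℕ) + 1

lemma isInert_id (x : SimplexCategory) : IsInert (𝟙 x) := by intro i; simp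

lemma isInert_from_zero {n : ℕ} (f : mk 0 ⟶ mk n) : IsInert f := fun i => i.elim0

lemma isInert_comp {x y z : SimplexCategory} {f : x ⟶ y} {g : y ⟶ z}
    (hf : IsInert f) (hg : IsInert g) : IsInert (f ≫ g) := by
  intro i
  have key : ∀ a b : Fin (y.len + 1), (b : ℕ) = (a : ℕ) + 1 →
      (g.toOrderHom b : ℕ) = (g.toOrderHom a : ℕ) + 1 := by
    intro a b hab
    have ha : (a : ℕ) < y.len := by have := b.isLt; omega
    have e1 : (⟨(a : ℕ), ha⟩ : Fin y.len).castSucc = a := by ext; simp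
    have e2 : (⟨(a : ℕ), ha⟩ : Fin y.len).succ = b := by ext; simp; omega
    have := hg ⟨(a : ℕ), ha⟩
    rw [e1, e2] at this
    exact this
  simpa using key _ _ (hf i)

lemma isActive_id (x : SimplexCategory) : IsActive (𝟙 x) := by
  constructor <;> simp

lemma isActive_comp {x y z : SimplexCategory} {f : x ⟶ y} {g : y ⟶ z}
    (hf : IsActive f) (hg : IsActive g) : IsActive (f ≫ g) := by
  constructor
  · show g.toOrderHom (f.toOrderHom 0) = 0
    rw [hf.1, hg.1]
  · show g.toOrderHom (f.toOrderHom (Fin.last x.len)) = Fin.last z.len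
    rw [hf.2, hg.2]

/-- The inert map `ρᵢ : [1] → [k]` with image `{i, i+1}` (0-indexed vertices;
in the 1-indexed labelling of the paper its image is `{i-1, i}`). -/
def rho (k : ℕ) (i : Fin k) : mk 1 ⟶ mk k :=
  mkHom ⟨fun j => ⟨(i : ℕ) + (j : ℕ), by have := i.isLt; have := j.isLt; omega⟩,
    fun a b h => by
      simp only [Fin.mk_le_mk]
      have : (a : ℕ) ≤ (b : ℕ) := h
      omega⟩

/-- The vertex map `[0] → [k]` picking out the vertex `j`. -/
def vtx (k : ℕ) (j : Fin (k + 1)) : mk 0 ⟶ mk k :=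
  mkHom ⟨fun _ => j, fun _ _ _ => le_refl _⟩

/-- The unique active map `[1] → [k]`. -/
def mu (k : ℕ) : mk 1 ⟶ mk k :=
  mkHom ⟨fun j => ⟨(j : ℕ) * k, by
      have hj : (j : ℕ) ≤ 1 := by have := j.isLt; omega
      have : (j : ℕ) * k ≤ 1 * k := Nat.mul_le_mul_right k hj
      omega⟩,
    fun a b h => by
      simp only [Fin.mk_le_mk]
      exact Nat.mul_le_mul_right k h⟩

lemma isActive_mu (k : ℕ) : IsActive (mu k) := by
  constructor
  · ext
    show ((0 : Fin 2) : ℕ) * k = ((0 : Fin (k+1)) : ℕ)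
    simp
  · ext
    show ((Fin.last 1 : Fin 2) : ℕ) * k = ((Fin.last k : Fin (k+1)) : ℕ)
    simp [Fin.last]

/-- Iterated bottom coface `(d⊥)^a : [m] → [m+a]`, where `d⊥ = δ 0 : i ↦ i+1`. -/
def dBotPow (m : ℕ) : (a : ℕ) → (mk m ⟶ mk (m + a))
  | 0 => 𝟙 _
  | a + 1 => dBotPow m a ≫ δ (0 : Fin (m + a + 2))

/-- Iterated top coface `(d⊤)^b : [m] → [m+b]`, where `d⊤ = δ (last) : i ↦ i`. -/
def dTopPow (m : ℕ) : (b : ℕ) → (mk m ⟶ mk (m + b))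
  | 0 => 𝟙 _
  | b + 1 => dTopPow m b ≫ δ (Fin.last (m + b + 1))

lemma isInert_dBot (m : ℕ) : IsInert (δ (0 : Fin (m + 2)) : mk m ⟶ mk (m + 1)) := by
  intro i
  show ((0 : Fin (m+2)).succAbove i.succ : ℕ) = ((0 : Fin (m+2)).succAbove i.castSucc : ℕ) + 1
  rw [Fin.succAbove_of_le_castSucc _ _ (by simp [Fin.le_def]),
    Fin.succAbove_of_le_castSucc _ _ (by simp [Fin.le_def])]
  simp

lemma isInert_dTop (m : ℕ) : IsInert (δ (Fin.last (m + 1)) : mk m ⟶ mk (m + 1)) := by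
  intro i
  show ((Fin.last (m+1)).succAbove i.succ : ℕ) = ((Fin.last (m+1)).succAbove i.castSucc : ℕ) + 1
  have hi : (i : ℕ) < m := by have := i.isLt; simpa [SimplexCategory.len_mk] using this
  rw [Fin.succAbove_of_castSucc_lt _ _ (by
      simp only [Fin.lt_def, Fin.coe_castSucc, Fin.val_succ, Fin.val_last]; omega),
    Fin.succAbove_of_castSucc_lt _ _ (by
      simp only [Fin.lt_def, Fin.coe_castSucc, Fin.val_last]; omega)]
  simp

lemma isInert_dBotPow (m a : ℕ) : IsInert (dBotPow m a) := by
  induction a with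
  | zero => exact isInert_id _
  | succ a ih => exact isInert_comp ih (isInert_dBot _)

lemma isInert_dTopPow (m b : ℕ) : IsInert (dTopPow m b) := by
  induction b with
  | zero => exact isInert_id _
  | succ b ih => exact isInert_comp ih (isInert_dTop _)

/-- The subcategory `Δ_inert` of the simplex category: objects are natural
numbers `n` (standing for the ordinal `[n]`), and morphisms `m ⟶ n` are the
inert maps `[m] → [n]`. -/
structure InertCat where
  n : ℕ

instance : Category InertCat where
  Hom x y := {f : mk x.n ⟶ mk y.n // IsInert f}
  id x := ⟨𝟙 _, isInert_id _⟩
  comp f g := ⟨f.1 ≫ g.1, isInert_comp f.2 g.2⟩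
  id_comp f := by apply Subtype.ext; simp
  comp_id f := by apply Subtype.ext; simp
  assoc f g h := by apply Subtype.ext; simp

/-- The inclusion `j : Δ_inert → Δ`. -/
def jF : InertCat ⥤ SimplexCategory where
  obj x := mk x.n
  map f := f.1
  map_id _ := rfl
  map_comp _ _ := rfl

/-- The top vertex `[0] → [m]` as a morphism of `Δ_inert`. -/
def topV (m : ℕ) : (⟨0⟩ : InertCat) ⟶ ⟨m⟩ :=
  ⟨vtx m (Fin.last m), isInert_from_zero _⟩

/-- The bottom vertex `[0] → [m]` as a morphism of `Δ_inert`. -/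
def botV (m : ℕ) : (⟨0⟩ : InertCat) ⟶ ⟨m⟩ :=
  ⟨vtx m 0, isInert_from_zero _⟩

/-- The outer coface `d⊥ : [0] → [1]` (omitting `0`) as a morphism of `Δ_inert`. -/
def dBotI : (⟨0⟩ : InertCat) ⟶ ⟨1⟩ := ⟨δ (0 : Fin 2), isInert_from_zero _⟩

/-- The outer coface `d⊤ : [0] → [1]` (omitting the top) as a morphism of `Δ_inert`. -/
def dTopI : (⟨0⟩ : InertCat) ⟶ ⟨1⟩ := ⟨δ (1 : Fin 2), isInert_from_zero _⟩

/-- The category with objects `ℕ` and morphisms `m ⟶ n` the pairs `(a,b)`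
with `a + m + b = n`, composed by componentwise addition. -/
structure NPairCat where
  n : ℕ

instance : Category NPairCat where
  Hom x y := {p : ℕ × ℕ // p.1 + x.n + p.2 = y.n}
  id x := ⟨(0, 0), by omega⟩
  comp f g := ⟨(f.1.1 + g.1.1, f.1.2 + g.1.2), by have h1 := f.2; have h2 := g.2; omega⟩
  id_comp f := by apply Subtype.ext; obtain ⟨⟨a, b⟩, h⟩ := f; simp
  comp_id f := by apply Subtype.ext; obtain ⟨⟨a, b⟩, h⟩ := f; simp
  assoc f g h := by apply Subtype.ext; simp; omega

/-- The one-object category `Bℕ` with endomorphism monoid `(ℕ,+)`. -/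
abbrev BN := SingleObj (Multiplicative ℕ)

/-- The twisted arrow category of a category `C`: objects are arrows of `C`,
and a morphism from `f'` to `f` is a pair `(a, b)` with `f = a ≫ f' ≫ b`,
i.e. `f = b ∘ f' ∘ a`. -/
def Tw (C : Type u) [Category.{v} C] := Σ (x : C) (y : C), x ⟶ y

instance (C : Type u) [Category.{v} C] : Category (Tw C) where
  Hom f g := {p : (g.1 ⟶ f.1) × (f.2.1 ⟶ g.2.1) // g.2.2 = p.1 ≫ f.2.2 ≫ p.2}
  id f := ⟨(𝟙 _, 𝟙 _), by simp⟩
  comp u v := ⟨(v.1.1 ≫ u.1.1, u.1.2 ≫ v.1.2), by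
    have hu := u.2
    have hv := v.2
    simp only []
    simp only [hv, hu, Category.assoc]⟩
  id_comp u := by apply Subtype.ext; simp
  comp_id u := by apply Subtype.ext; simp
  assoc u v w := by apply Subtype.ext; simp

/-- Extract the pair of natural numbers underlying a morphism in `Tw Bℕ`. -/
def twBNPair {f g : Tw BN} (u : f ⟶ g) : ℕ × ℕ :=
  (Multiplicative.toAdd (show Multiplicative ℕ from u.1.1),
   Multiplicative.toAdd (show Multiplicative ℕ from u.1.2))

/-- Extract the natural number underlying an object of `Tw Bℕ`. -/
def twBNObj (f : Tw BN) : ℕ :=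
  Multiplicative.toAdd (show Multiplicative ℕ from f.2.2)

/-- The type of `k`-simplices of the free simplicial set on `A : Δ_inert^op → Set`:
the explicit formula `X_k = ∑_{α : [k] ↠ [n] active} A_n`. -/
def FD (A : InertCat ᵒᵖ ⥤ Type) (k : ℕ) : Type :=
  Σ n : ℕ, {α : mk k ⟶ mk n // IsActive α} × A.obj (Opposite.op ⟨n⟩)

/-- The action of an active map `g : [k'] → [k]` on the free simplicial set,
given by precomposition on the indexing active maps and the identity on summands. -/
def FDmap (A : InertCat ᵒᵖ ⥤ Type) {k' k : ℕ} (g : mk k' ⟶ mk k) (hg : IsActive g) :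
    FD A k → FD A k' :=
  fun x => ⟨x.1, ⟨g ≫ x.2.1.1, isActive_comp hg x.2.1.2⟩, x.2.2⟩

/-- The map of free simplicial sets induced by a natural transformation. -/
def FDmapNat {A' A : InertCat ᵒᵖ ⥤ Type} (η : A' ⟶ A) (k : ℕ) : FD A' k → FD A k :=
  fun x => ⟨x.1, x.2.1, η.app _ x.2.2⟩

/-- The tuple of successive differences of a map `α : [k] → [n]`. -/
def diff {k n : ℕ} (α : mk k ⟶ mk n) : Fin k → ℕ :=
  fun i => (α.toOrderHom i.succ : ℕ) - (α.toOrderHom i.castSucc : ℕ)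

/-- The set `Act(k)` of active maps out of `[k]` (with arbitrary codomain). -/
def ActFrom (k : ℕ) : Type :=
  Σ n : ℕ, {α : mk k ⟶ mk n // IsActive α}

/-- The difference map `Act(k) → ℕ^k`. -/
def diffMap (k : ℕ) : ActFrom k → (Fin k → ℕ) := fun x => diff x.2.1

/-- The action of `φ : [k'] → [k]` on the `k`-simplices `ℕ^k` of the nerve of
`Bℕ`: the `i`-th entry of the result is the sum of the entries from `φ(i-1)`
to `φ(i) - 1`. -/
def nerveBNAct {k' k : ℕ} (φ : mk k' ⟶ mk k) (x : Fin k → ℕ) : Fin k' → ℕ :=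
  fun i => ∑ j ∈ Finset.Ico ((φ.toOrderHom i.castSucc : ℕ)) ((φ.toOrderHom i.succ : ℕ)),
    (fun t => if h : t < k then x ⟨t, h⟩ else 0) j

/-- The inert map `γᵢ : [nᵢ] → [n]`, `j ↦ α(i) + j` (where `nᵢ = α(i+1) - α(i)`),
appearing in the active-inert factorization of `α ∘ ρᵢ`. -/
def segIncl {k n : ℕ} (α : mk k ⟶ mk n) (i : Fin k) : mk (diff α i) ⟶ mk n :=
  mkHom ⟨fun j => ⟨(α.toOrderHom i.castSucc : ℕ) + (j : ℕ), by
      have hj : (j : ℕ) ≤ diff α i := by have := j.isLt; simp [len_mk] at this; omega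
      have hle : (α.toOrderHom i.castSucc : ℕ) ≤ (α.toOrderHom i.succ : ℕ) :=
        α.toOrderHom.monotone (Fin.castSucc_le_succ i)
      have := (α.toOrderHom i.succ).isLt
      simp only [diff] at hj
      simp [len_mk] at *
      omega⟩,
    fun a b h => by
      simp only [Fin.mk_le_mk]
      have : (a : ℕ) ≤ (b : ℕ) := h
      omega⟩

lemma isInert_segIncl {k n : ℕ} (α : mk k ⟶ mk n) (i : Fin k) :
    IsInert (segIncl α i) := by
  intro t
  show ((α.toOrderHom i.castSucc : ℕ) + (t.succ : ℕ)) =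
    ((α.toOrderHom i.castSucc : ℕ) + (t.castSucc : ℕ)) + 1
  simp
  omega

/-- `γᵢ` as a morphism of `Δ_inert`. -/
def segInclI {k n : ℕ} (α : mk k ⟶ mk n) (i : Fin k) : (⟨diff α i⟩ : InertCat) ⟶ ⟨n⟩ :=
  ⟨segIncl α i, isInert_segIncl α i⟩

/-- The Segal map of the free simplicial set `X = j_!(A)`: it sends the
`α`-summand `A_n` of `X_k` to the tuple of its restrictions along the `γᵢ`. -/
def fdSegalMap (A : InertCat ᵒᵖ ⥤ Type) (k : ℕ) : FD A k → (Fin k → FD A 1) :=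
  fun x i => ⟨diff x.2.1.1 i, ⟨mu (diff x.2.1.1 i), isActive_mu _⟩,
    A.map (segInclI x.2.1.1 i).op x.2.2⟩

/-- Matching (fiber product over `X_0`) condition for a tuple in `(X_1)^k`:
consecutive components agree in `A_0` under top/bottom vertex restrictions. -/
def fdMatching (A : InertCat ᵒᵖ ⥤ Type) (k : ℕ) (t : Fin k → FD A 1) : Prop :=
  ∀ (i : Fin k) (h : (i : ℕ) + 1 < k),
    A.map (topV (t i).1).op ((t i).2.2) =
      A.map (botV (t ⟨(i : ℕ) + 1, h⟩).1).op ((t ⟨(i : ℕ) + 1, h⟩).2.2)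

/-- The restriction map `A_n → ∏ᵢ A_{nᵢ}` along the covering family `{γᵢ}`
associated to an active map `α : [k] → [n]`. -/
def resMap (A : InertCat ᵒᵖ ⥤ Type) {k n : ℕ} (α : mk k ⟶ mk n) :
    A.obj (Opposite.op ⟨n⟩) → ∀ i : Fin k, A.obj (Opposite.op ⟨diff α i⟩) :=
  fun a i => A.map (segInclI α i).op a

/-- Matching (fiber product over `A_0`) condition for a tuple in `∏ᵢ A_{nᵢ}`. -/
def resMatching (A : InertCat ᵒᵖ ⥤ Type) {k n : ℕ} (α : mk k ⟶ mk n)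
    (t : ∀ i : Fin k, A.obj (Opposite.op ⟨diff α i⟩)) : Prop :=
  ∀ (i : Fin k) (h : (i : ℕ) + 1 < k),
    A.map (topV (diff α i)).op (t i) =
      A.map (botV (diff α ⟨(i : ℕ) + 1, h⟩)).op (t ⟨(i : ℕ) + 1, h⟩)

/-- The length functor from the path category of a quiver to `Bℕ`. -/
def lengthFunctor (Q : Type u) [Quiver.{u + 1} Q] : Paths Q ⥤ BN where
  obj _ := SingleObj.star _
  map p := Multiplicative.ofAdd p.length
  map_id _ := rfl
  map_comp {x y z} p q := by
    show Multiplicative.ofAdd (p.comp q).length = _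
    show _ = (Multiplicative.ofAdd q.length) * (Multiplicative.ofAdd p.length)
    rw [Quiver.Path.length_comp (V := Q) p q, ← ofAdd_add]
    exact congrArg Multiplicative.ofAdd (Nat.add_comm _ _)

/-- A functor to `Bℕ` is CULF if every factorization in `(ℕ,+)` of the image of
a morphism `f` lifts uniquely to a factorization of `f`. -/
def IsCULF {C : Type u} [Category.{v} C] (F : C ⥤ BN) : Prop :=
  ∀ {x y : C} (f : x ⟶ y) (a b : Multiplicative ℕ), F.map f = a * b →
    ∃! p : Σ z : C, (x ⟶ z) × (z ⟶ y),
      p.2.1 ≫ p.2.2 = f ∧ F.map p.2.1 = a ∧ F.map p.2.2 = b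

/-- The category `𝕃` of finite linear orders `{1,…,n}` and convex monotone
injections. -/
structure LinOrdCat where
  n : ℕ

/-- A convex monotone injection between finite linear orders. -/
def IsConvexEmb {m n : ℕ} (f : Fin m → Fin n) : Prop :=
  StrictMono f ∧ ∀ (a b : Fin m) (c : Fin n), f a ≤ c → c ≤ f b → ∃ x, f x = c

instance : Category LinOrdCat where
  Hom x y := {f : Fin x.n → Fin y.n // IsConvexEmb f}
  id x := ⟨id, strictMono_id, fun _ _ c _ _ => ⟨c, rfl⟩⟩
  comp f g := ⟨g.1 ∘ f.1, (g.2.1).comp f.2.1, by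
    intro a b c h1 h2
    obtain ⟨w, hw⟩ := g.2.2 (f.1 a) (f.1 b) c h1 h2
    have ha : f.1 a ≤ w := by
      rw [← (g.2.1).le_iff_le]; rw [hw]; exact h1
    have hb : w ≤ f.1 b := by
      rw [← (g.2.1).le_iff_le]; rw [hw]; exact h2
    obtain ⟨v, hv⟩ := f.2.2 a b w ha hb
    exact ⟨v, by simp [Function.comp, hv, hw]⟩⟩
  id_comp f := by apply Subtype.ext; rfl
  comp_id f := by apply Subtype.ext; rfl
  assoc f g h := by apply Subtype.ext; rfl

/-!
An active map `α : [k] → [n]` is recovered from its differences by partial sums,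
`α c = α 0 + ∑_{j < c} (α (j+1) - α j)` with `α 0 = 0`, and conversely the partial sums of any
`x ∈ ℕ^k` form an active map with differences `x`. An inert map is a translation, so it does not
change differences, while the differences of `φ ≫ α` are sums of consecutive differences of `α`,
which is exactly the nerve action of `φ` on `ℕ^k`.
-/

def extendByZero {k : ℕ} (x : Fin k → ℕ) (t : ℕ) : ℕ :=
  if h : t < k then x ⟨t, h⟩ else 0

lemma extendByZero_of_lt {k : ℕ} (x : Fin k → ℕ) {t : ℕ} (h : t < k) :
    extendByZero x t = x ⟨t, h⟩ :=
  dif_pos h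

lemma nerveBNAct_apply {k' k : ℕ} (φ : mk k' ⟶ mk k) (x : Fin k → ℕ) (i : Fin k') :
    nerveBNAct φ x i =
      ∑ j ∈ Finset.Ico (φ.toOrderHom i.castSucc : ℕ) (φ.toOrderHom i.succ : ℕ),
        extendByZero x j :=
  rfl

lemma diff_add_apply_castSucc {k n : ℕ} (α : mk k ⟶ mk n) (i : Fin k) :
    diff α i + (α.toOrderHom i.castSucc : ℕ) = α.toOrderHom i.succ := by
  have : (α.toOrderHom i.castSucc : ℕ) ≤ α.toOrderHom i.succ :=
    α.toOrderHom.monotone (Fin.castSucc_le_succ i)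
  unfold diff
  omega

lemma apply_eq_add_sum_diff {k n : ℕ} (α : mk k ⟶ mk n) (c : Fin (k + 1)) :
    (α.toOrderHom c : ℕ) =
      α.toOrderHom 0 + ∑ j ∈ Finset.range c, extendByZero (diff α) j := by
  induction c using Fin.induction with
  | zero => simp
  | succ i ih =>
    rw [← diff_add_apply_castSucc, ih, Fin.val_succ, Finset.sum_range_succ,
      extendByZero_of_lt _ i.isLt]
    simp only [Fin.val_castSucc, Fin.eta]
    omega

lemma sum_Ico_extendByZero_diff {k n : ℕ} (α : mk k ⟶ mk n) {a b : Fin (k + 1)}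
    (hab : a ≤ b) :
    ∑ j ∈ Finset.Ico (a : ℕ) b, extendByZero (diff α) j =
      (α.toOrderHom b : ℕ) - α.toOrderHom a := by
  rw [apply_eq_add_sum_diff α a, apply_eq_add_sum_diff α b,
    ← Finset.sum_range_add_sum_Ico _ (Fin.le_def.mp hab)]
  omega

theorem diff_comp {k' k n : ℕ} (φ : mk k' ⟶ mk k) (α : mk k ⟶ mk n) :
    diff (φ ≫ α) = nerveBNAct φ (diff α) := by
  funext i
  rw [nerveBNAct_apply,
    sum_Ico_extendByZero_diff α (φ.toOrderHom.monotone (Fin.castSucc_le_succ i))]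
  rfl

lemma IsInert.apply_eq_add {m n : ℕ} {ψ : mk m ⟶ mk n} (hψ : IsInert ψ) (c : Fin (m + 1)) :
    (ψ.toOrderHom c : ℕ) = ψ.toOrderHom 0 + c := by
  induction c using Fin.induction with
  | zero => simp
  | succ i ih =>
    rw [Fin.val_succ, hψ i, ih, Fin.val_castSucc, add_assoc]

theorem IsInert.diff_comp {k m n : ℕ} {ψ : mk m ⟶ mk n} (hψ : IsInert ψ) (α : mk k ⟶ mk m) :
    diff (α ≫ ψ) = diff α := by
  funext i
  change (ψ.toOrderHom _ : ℕ) - ψ.toOrderHom _ = _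
  rw [hψ.apply_eq_add (α.toOrderHom i.succ), hψ.apply_eq_add (α.toOrderHom i.castSucc)]
  unfold diff
  omega

lemma IsActive.eq_sum_diff {k n : ℕ} {α : mk k ⟶ mk n} (hα : IsActive α) :
    n = ∑ j ∈ Finset.range k, extendByZero (diff α) j := by
  simpa [hα.1, hα.2] using apply_eq_add_sum_diff α (Fin.last k)

lemma hom_ext_of_diff_eq {k n : ℕ} {α β : mk k ⟶ mk n}
    (h₀ : α.toOrderHom 0 = β.toOrderHom 0) (h : diff α = diff β) : α = β := by
  ext c : 3
  rw [Fin.val_inj.symm, apply_eq_add_sum_diff α, apply_eq_add_sum_diff β, h₀, h]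

theorem diffMap_injective (k : ℕ) : Function.Injective (diffMap k) := by
  rintro ⟨n, α, hα⟩ ⟨m, β, hβ⟩ (h : diff α = diff β)
  obtain rfl : n = m := by rw [hα.eq_sum_diff, hβ.eq_sum_diff, h]
  obtain rfl : α = β := hom_ext_of_diff_eq (hα.1.trans hβ.1.symm) h
  rfl

def ofDiff {k : ℕ} (x : Fin k → ℕ) : mk k ⟶ mk (∑ j ∈ Finset.range k, extendByZero x j) :=
  mkHom ⟨fun c => ⟨∑ j ∈ Finset.range c, extendByZero x j, Nat.lt_succ_of_le <|
      Finset.sum_le_sum_of_subset (Finset.range_subset_range.2 (Nat.le_of_lt_succ c.isLt))⟩,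
    fun _ _ hab => Fin.mk_le_mk.2 <|
      Finset.sum_le_sum_of_subset (Finset.range_subset_range.2 hab)⟩

lemma isActive_ofDiff {k : ℕ} (x : Fin k → ℕ) : IsActive (ofDiff x) :=
  ⟨Fin.ext (Finset.sum_range_zero (extendByZero x)), rfl⟩

lemma diff_ofDiff {k : ℕ} (x : Fin k → ℕ) : diff (ofDiff x) = x := by
  funext i
  change ∑ j ∈ Finset.range (i + 1), extendByZero x j - ∑ j ∈ Finset.range i, extendByZero x j
    = x i
  rw [Finset.sum_range_succ, extendByZero_of_lt _ i.isLt, Nat.add_sub_cancel_left]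

theorem diffMap_surjective (k : ℕ) : Function.Surjective (diffMap k) :=
  fun x => ⟨⟨_, ofDiff x, isActive_ofDiff x⟩, diff_ofDiff x⟩

/-- The identification of `Arr^act(Δ)^cart` with the category
of elements of the nerve of `Bℕ`, over `Δ`: on objects the difference map
`Act(k) → ℕ^k` is a bijection, and it intertwines the two actions of a map
`φ : [k'] → [k]` (factorization on one side, the nerve action by partial sums
on the other side). -/
theorem arrAct_equiv_el_nerve_BN :
    (∀ k : ℕ, Function.Bijective (diffMap k)) ∧
    (∀ {k' k n' n : ℕ} (φ : mk k' ⟶ mk k) (α : mk k ⟶ mk n)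
      (α' : mk k' ⟶ mk n') (ψ : mk n' ⟶ mk n),
      IsActive α → IsActive α' → IsInert ψ → α' ≫ ψ = φ ≫ α →
      diff α' = nerveBNAct φ (diff α)) := by
  refine ⟨fun k => ⟨diffMap_injective k, diffMap_surjective k⟩, ?_⟩
  intro k' k n' n φ α α' ψ _ _ hψ hcomm
  rw [← hψ.diff_comp α', hcomm, diff_comp]

end FreeDecompPaper
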